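/- Let N_sub, N_s be positive integers, N = N_sub · N_s, let M = I_{N_sub} ⊗ 1_{N_s} be the mask matrix, and let U_S^V, U_S^K be J × J real matrices. Define the local attention map on J × N real matrices by F(D) = U_S^V D ((U_S^K D)^T D ⊙ M). Let Π be a J × J permutation matrix such that Π U_S^K = U_S^K Π and Π U_S^V = U_S^V Π. Then for every nested permutation matrix Ω = (Π_sub ⊗ I_{N_s}) · diag(Π_1, …, Π_{N_sub}) and every J × N matrix D, F(Πᵀ D Ω) = Πᵀ F(D) Ω. -/

import Mathlib

/-!
Both `Π` and `Ω` are permutation matrices, and `Ω` is the matrix of the permutation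
`(k, s) ↦ (σsub k, σs (σsub k) s)`, which preserves block membership; hence conjugation by `Ω`
commutes with masking by `M`. Since `Π` commutes with `U_S^K`, the score matrix of `Πᵀ D Ω` is
`Ωᵀ (U_S^K D)ᵀ Π Πᵀ D Ω = Ωᵀ (U_S^K D)ᵀ D Ω`, and in the product with the value factor
`U_S^V Πᵀ D Ω = Πᵀ U_S^V D Ω` the inner `Ω Ωᵀ` cancels.
-/

open Matrix
open scoped Kronecker

noncomputable section

/-- The permutation matrix of a permutation `σ`: entry `(i, j)` is `1` iff `σ i = j`. -/
def permMatrix {I : Type*} [DecidableEq I] (σ : Equiv.Perm I) : Matrix I I ℝ :=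
  Matrix.of fun i j => if σ i = j then 1 else 0

/-- The block-diagonal matrix `diag(B 0, …, B (Nsub - 1))`, indexed by
`Fin Nsub × Fin Ns` (block index first). -/
def blockDiag {Nsub Ns : ℕ} (B : Fin Nsub → Matrix (Fin Ns) (Fin Ns) ℝ) :
    Matrix (Fin Nsub × Fin Ns) (Fin Nsub × Fin Ns) ℝ :=
  Matrix.of fun p q => if p.1 = q.1 then B p.1 p.2 q.2 else 0

/-- The nested permutation matrix `Ω = (Π_sub ⊗ I_{N_s}) · diag(Π_1, …, Π_{N_sub})`. -/
def nestedPermMatrix {Nsub Ns : ℕ} (σsub : Equiv.Perm (Fin Nsub))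
    (σs : Fin Nsub → Equiv.Perm (Fin Ns)) :
    Matrix (Fin Nsub × Fin Ns) (Fin Nsub × Fin Ns) ℝ :=
  (permMatrix σsub ⊗ₖ (1 : Matrix (Fin Ns) (Fin Ns) ℝ)) *
    blockDiag (fun k => permMatrix (σs k))

/-- The mask matrix `M = I_{N_sub} ⊗ 1_{N_s}`, where `1_{N_s}` is the all-ones matrix. -/
def maskMatrix (Nsub Ns : ℕ) : Matrix (Fin Nsub × Fin Ns) (Fin Nsub × Fin Ns) ℝ :=
  (1 : Matrix (Fin Nsub) (Fin Nsub) ℝ) ⊗ₖ (Matrix.of fun _ _ => (1 : ℝ))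

/-- The local attention map `F(D) = U_S^V D ((U_S^K D)ᵀ D ⊙ M)`. -/
def localAtt {J Nsub Ns : ℕ} (USV USK : Matrix (Fin J) (Fin J) ℝ)
    (D : Matrix (Fin J) (Fin Nsub × Fin Ns) ℝ) : Matrix (Fin J) (Fin Nsub × Fin Ns) ℝ :=
  USV * D * (((USK * D)ᵀ * D) ⊙ maskMatrix Nsub Ns)


theorem permMatrix_eq_perm_permMatrix {I : Type*} [DecidableEq I] (σ : Equiv.Perm I) :
    permMatrix σ = σ.permMatrix ℝ := by
  ext i j
  simp [permMatrix]

section PermMatrix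

variable {ι R : Type*} [DecidableEq ι] [Fintype ι] [NonAssocSemiring R]

theorem Matrix.permMatrix_mul_transpose (σ : Equiv.Perm ι) :
    σ.permMatrix R * (σ.permMatrix R)ᵀ = 1 := by
  rw [transpose_permMatrix, ← permMatrix_mul, inv_mul_cancel, permMatrix_one]

theorem Matrix.transpose_permMatrix_mul (σ : Equiv.Perm ι) :
    (σ.permMatrix R)ᵀ * σ.permMatrix R = 1 := by
  rw [transpose_permMatrix, ← permMatrix_mul, mul_inv_cancel, permMatrix_one]

theorem Matrix.transpose_permMatrix_mul_mul_permMatrix (σ : Equiv.Perm ι) (A : Matrix ι ι R) :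
    (σ.permMatrix R)ᵀ * A * σ.permMatrix R = A.submatrix σ.symm σ.symm := by
  rw [transpose_permMatrix, PEquiv.toMatrix_toPEquiv_mul, PEquiv.mul_toMatrix_toPEquiv,
    submatrix_submatrix]
  rfl

theorem Matrix.conj_permMatrix_hadamard {σ : Equiv.Perm ι} {M : Matrix ι ι R}
    (hM : M.submatrix σ σ = M) (A : Matrix ι ι R) :
    ((σ.permMatrix R)ᵀ * A * σ.permMatrix R) ⊙ M
      = (σ.permMatrix R)ᵀ * (A ⊙ M) * σ.permMatrix R := by
  have hM' : M.submatrix σ.symm σ.symm = M := by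
    conv_lhs => rw [← hM]
    simp
  rw [transpose_permMatrix_mul_mul_permMatrix, transpose_permMatrix_mul_mul_permMatrix,
    submatrix_hadamard, hM']

end PermMatrix

theorem Matrix.commute_transpose_permMatrix_left {ι R : Type*} [DecidableEq ι] [Fintype ι]
    [Semiring R] {σ : Equiv.Perm ι} {U : Matrix ι ι R} (h : Commute (σ.permMatrix R) U) :
    Commute (σ.permMatrix R)ᵀ U :=
  Commute.units_inv_left (u := ⟨_, _, permMatrix_mul_transpose σ, transpose_permMatrix_mul σ⟩) h

theorem Matrix.kronecker_permMatrix {ι κ R : Type*} [DecidableEq ι] [DecidableEq κ]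
    [MulZeroOneClass R] (σ : Equiv.Perm ι) (τ : Equiv.Perm κ) :
    σ.permMatrix R ⊗ₖ τ.permMatrix R = Equiv.Perm.permMatrix R (σ.prodCongr τ) := by
  ext ⟨i, k⟩ ⟨j, l⟩
  simp [← ite_and, and_comm]

theorem blockDiag_permMatrix {Nsub Ns : ℕ} (σs : Fin Nsub → Equiv.Perm (Fin Ns)) :
    _root_.blockDiag (fun k => permMatrix (σs k))
      = Equiv.Perm.permMatrix ℝ ((Equiv.refl _).prodShear σs) := by
  ext ⟨k, s⟩ ⟨l, t⟩
  by_cases h : k = l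
  · subst h; simp [_root_.blockDiag, permMatrix, Equiv.prodShear]
  · simp [_root_.blockDiag, Equiv.prodShear, h]

def nestedPerm {Nsub Ns : ℕ} (σsub : Equiv.Perm (Fin Nsub))
    (σs : Fin Nsub → Equiv.Perm (Fin Ns)) : Equiv.Perm (Fin Nsub × Fin Ns) :=
  σsub.prodShear fun k => σs (σsub k)

theorem nestedPermMatrix_eq_permMatrix {Nsub Ns : ℕ} (σsub : Equiv.Perm (Fin Nsub))
    (σs : Fin Nsub → Equiv.Perm (Fin Ns)) :
    nestedPermMatrix σsub σs = (nestedPerm σsub σs).permMatrix ℝ := by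
  rw [nestedPermMatrix, permMatrix_eq_perm_permMatrix, ← permMatrix_one, kronecker_permMatrix,
    blockDiag_permMatrix, ← permMatrix_mul]
  rfl

theorem maskMatrix_submatrix_nestedPerm {Nsub Ns : ℕ} (σsub : Equiv.Perm (Fin Nsub))
    (σs : Fin Nsub → Equiv.Perm (Fin Ns)) :
    (maskMatrix Nsub Ns).submatrix (nestedPerm σsub σs) (nestedPerm σsub σs)
      = maskMatrix Nsub Ns := by
  ext ⟨k, s⟩ ⟨l, t⟩
  simp [maskMatrix, nestedPerm, Equiv.prodShear, one_apply]

theorem localAtt_transpose_mul_mul {J Nsub Ns : ℕ} {USV USK P : Matrix (Fin J) (Fin J) ℝ}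
    {Ω : Matrix (Fin Nsub × Fin Ns) (Fin Nsub × Fin Ns) ℝ}
    (hP : P * Pᵀ = 1) (hΩ : Ω * Ωᵀ = 1) (hK : Commute Pᵀ USK) (hV : Commute Pᵀ USV)
    (hmask : ∀ A, (Ωᵀ * A * Ω) ⊙ maskMatrix Nsub Ns = Ωᵀ * (A ⊙ maskMatrix Nsub Ns) * Ω)
    (D : Matrix (Fin J) (Fin Nsub × Fin Ns) ℝ) :
    localAtt USV USK (Pᵀ * D * Ω) = Pᵀ * localAtt USV USK D * Ω := by
  have hscores : (USK * (Pᵀ * D * Ω))ᵀ * (Pᵀ * D * Ω) = Ωᵀ * ((USK * D)ᵀ * D) * Ω := by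
    calc (USK * (Pᵀ * D * Ω))ᵀ * (Pᵀ * D * Ω)
        = Ωᵀ * (USK * D)ᵀ * (P * Pᵀ) * D * Ω := by
          simp only [← Matrix.mul_assoc, ← hK.eq, transpose_mul, transpose_transpose]
      _ = Ωᵀ * ((USK * D)ᵀ * D) * Ω := by
          rw [hP, Matrix.mul_one, Matrix.mul_assoc _ _ D]
  calc localAtt USV USK (Pᵀ * D * Ω)
      = USV * Pᵀ * D * (Ω * Ωᵀ) * (((USK * D)ᵀ * D) ⊙ maskMatrix Nsub Ns) * Ω := by
        rw [localAtt, hscores, hmask]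
        simp only [Matrix.mul_assoc]
    _ = Pᵀ * localAtt USV USK D * Ω := by
        rw [hΩ, Matrix.mul_one, ← hV.eq]
        simp only [localAtt, Matrix.mul_assoc]

theorem localAtt_partialNestedTwoPE_general {J Nsub Ns : ℕ}
    (USV USK : Matrix (Fin J) (Fin J) ℝ) (π : Equiv.Perm (Fin J))
    (hK : permMatrix π * USK = USK * permMatrix π)
    (hV : permMatrix π * USV = USV * permMatrix π)
    (σsub : Equiv.Perm (Fin Nsub)) (σs : Fin Nsub → Equiv.Perm (Fin Ns))
    (D : Matrix (Fin J) (Fin Nsub × Fin Ns) ℝ) :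
    localAtt USV USK ((permMatrix π)ᵀ * D * nestedPermMatrix σsub σs)
      = (permMatrix π)ᵀ * localAtt USV USK D * nestedPermMatrix σsub σs := by
  rw [permMatrix_eq_perm_permMatrix] at hK hV ⊢
  rw [nestedPermMatrix_eq_permMatrix]
  exact localAtt_transpose_mul_mul (permMatrix_mul_transpose π) (permMatrix_mul_transpose _)
    (commute_transpose_permMatrix_left hK) (commute_transpose_permMatrix_left hV)
    (conj_permMatrix_hadamard (maskMatrix_submatrix_nestedPerm σsub σs)) D

/-- If the weight matrices commute with the permutation matrix `Π`, then the local
attention map satisfies `F(Πᵀ D Ω) = Πᵀ F(D) Ω` for every nested permutation `Ω`. -/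
theorem localAtt_partialNestedTwoPE {J Nsub Ns : ℕ} (hNsub : 0 < Nsub) (hNs : 0 < Ns)
    (USV USK : Matrix (Fin J) (Fin J) ℝ) (π : Equiv.Perm (Fin J))
    (hK : permMatrix π * USK = USK * permMatrix π)
    (hV : permMatrix π * USV = USV * permMatrix π)
    (σsub : Equiv.Perm (Fin Nsub)) (σs : Fin Nsub → Equiv.Perm (Fin Ns))
    (D : Matrix (Fin J) (Fin Nsub × Fin Ns) ℝ) :
    localAtt USV USK ((permMatrix π)ᵀ * D * nestedPermMatrix σsub σs)
      = (permMatrix π)ᵀ * localAtt USV USK D * nestedPermMatrix σsub σs :=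
  localAtt_partialNestedTwoPE_general USV USK π hK hV σsub σs D
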